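/- The set of complex roots of polynomials f(n) = Σ_{i=0}^3 δ_i binom(n+3-i,3) with δ = (1,b,b,1), b ranging over nonnegative reals, together with the roots of the SSNN polynomial with δ = (0,1,1,0), equals [-1,0] ∪ { α ∈ ℂ : Re(α) = -1/2, 0 < |Im(α)| ≤ √23/2 }. -/

import Mathlib

/-!
With `δ = (1, b, b, 1)` the polynomial factors as `(2α + 1)((1 + b)(α² + α) + 6) / 6`, and with
`δ = (0, 1, 1, 0)` as `(2α + 1)(α² + α) / 6`. Hence a root `α` is one for which `(α + 1/2)²` is a
real number `t ∈ [-23/4, 1/4]`: `t = 1/4 - 6/(1 + b)` sweeps out `[-23/4, 1/4)` as `b` runs over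
`[0, ∞)`, and the second polynomial supplies `t = 1/4`. A complex number has a real square in
`[-23/4, 1/4]` exactly when it is real of modulus at most `1/2` or purely imaginary of modulus
at most `√23/2`.
-/

/-- Polynomial binomial coefficient `binom(x, k) = x(x-1)⋯(x-k+1)/k!` in a complex variable. -/
noncomputable def cbinom (x : ℂ) (k : ℕ) : ℂ :=
  (∏ j ∈ Finset.range k, (x - (j : ℂ))) / (k.factorial : ℂ)

open Set

lemma cbinom_three (x : ℂ) : cbinom x 3 = x * (x - 1) * (x - 2) / 6 := by
  simp [cbinom, Finset.prod_range_succ, Nat.factorial]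

lemma cbinom_symmetric_sum_eq (α b : ℂ) :
    cbinom (α + 3) 3 + b * cbinom (α + 2) 3 + b * cbinom (α + 1) 3 + cbinom α 3 =
      (2 * α + 1) * ((1 + b) * (α ^ 2 + α) + 6) / 6 := by
  simp only [cbinom_three]
  ring

lemma cbinom_add_two_add_cbinom_add_one (α : ℂ) :
    cbinom (α + 2) 3 + cbinom (α + 1) 3 = (2 * α + 1) * (α ^ 2 + α) / 6 := by
  simp only [cbinom_three]
  ring

lemma Complex.exists_ofReal_mem_Icc_eq_sq_iff {a c : ℝ} (ha : a ≤ 0) (hc : 0 ≤ c) (z : ℂ) :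
    (∃ t ∈ Icc a c, z ^ 2 = t) ↔ (z.im = 0 ∧ z.re ^ 2 ≤ c) ∨ (z.re = 0 ∧ z.im ^ 2 ≤ -a) := by
  constructor
  · rintro ⟨t, ⟨hat, htc⟩, hz⟩
    have hre : z.re ^ 2 - z.im ^ 2 = t := by simpa [sq] using congrArg Complex.re hz
    have him : z.re * z.im = 0 := by
      have := congrArg Complex.im hz
      simp only [sq, Complex.mul_im, Complex.ofReal_im] at this
      linarith
    rcases mul_eq_zero.mp him with h | h
    · right; exact ⟨h, by nlinarith⟩
    · left; exact ⟨h, by nlinarith⟩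
  · rintro (⟨him, hre⟩ | ⟨hre, him⟩)
    · refine ⟨z.re ^ 2, ⟨by nlinarith, hre⟩, ?_⟩
      conv_lhs => rw [← Complex.re_add_im z]
      simp [him]
    · refine ⟨-z.im ^ 2, ⟨by linarith, by nlinarith⟩, ?_⟩
      conv_lhs => rw [← Complex.re_add_im z]
      simp [hre, mul_pow]

lemma exists_sq_add_half_eq_of_quadratic_factor_eq_zero {α : ℂ} {b : ℝ} (hb : 0 ≤ b)
    (h : (1 + (b : ℂ)) * (α ^ 2 + α) + 6 = 0) :
    ∃ t ∈ Icc (-23 / 4 : ℝ) (1 / 4), (α + 1 / 2) ^ 2 = t := by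
  have hb1 : (0 : ℝ) < 1 + b := by linarith
  have hb1' : (1 + (b : ℂ)) ≠ 0 := by exact_mod_cast hb1.ne'
  refine ⟨1 / 4 - 6 / (1 + b), ⟨?_, ?_⟩, ?_⟩
  · linarith [div_le_self (by norm_num : (0 : ℝ) ≤ 6) (by linarith : (1 : ℝ) ≤ 1 + b)]
  · linarith [div_pos (by norm_num : (0 : ℝ) < 6) hb1]
  · push_cast
    field_simp
    linear_combination 16 * h

lemma exists_quadratic_factor_eq_zero_of_sq_add_half_eq {α : ℂ} {t : ℝ} (ht : t ∈ Ico (-23 / 4 : ℝ) (1 / 4))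
    (h : (α + 1 / 2) ^ 2 = t) : ∃ b : ℝ, 0 ≤ b ∧ (1 + (b : ℂ)) * (α ^ 2 + α) + 6 = 0 := by
  obtain ⟨hlo, hhi⟩ := ht
  set s := 1 / 4 - t with hs
  have hpos : 0 < s := by linarith
  refine ⟨6 / s - 1, ?_, ?_⟩
  · linarith [(one_le_div hpos).mpr (by linarith : s ≤ 6)]
  · have hα : α ^ 2 + α = ((-s : ℝ) : ℂ) := by push_cast [hs]; linear_combination h
    have hreal : (1 + (6 / s - 1)) * -s + 6 = 0 := by field_simp; ring
    rw [hα]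
    exact_mod_cast hreal

lemma roots_iff_exists_sq_add_half_eq (α : ℂ) :
    ((∃ b : ℝ, 0 ≤ b ∧ (2 * α + 1) * ((1 + (b : ℂ)) * (α ^ 2 + α) + 6) = 0) ∨
        (2 * α + 1) * (α ^ 2 + α) = 0) ↔
      ∃ t ∈ Icc (-23 / 4 : ℝ) (1 / 4), (α + 1 / 2) ^ 2 = t := by
  constructor
  · have of_center : 2 * α + 1 = 0 → ∃ t ∈ Icc (-23 / 4 : ℝ) (1 / 4), (α + 1 / 2) ^ 2 = t :=
      fun h ↦ ⟨0, by norm_num, by push_cast; linear_combination (2 * α + 1) * h / 4⟩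
    rintro (⟨b, hb, h⟩ | h) <;> rcases mul_eq_zero.mp h with h | h
    · exact of_center h
    · exact exists_sq_add_half_eq_of_quadratic_factor_eq_zero hb h
    · exact of_center h
    · exact ⟨1 / 4, by norm_num, by push_cast; linear_combination h⟩
  · rintro ⟨t, ⟨hlo, hhi⟩, h⟩
    rcases hhi.lt_or_eq with hlt | rfl
    · obtain ⟨b, hb, hroot⟩ := exists_quadratic_factor_eq_zero_of_sq_add_half_eq ⟨hlo, hlt⟩ h
      exact Or.inl ⟨b, hb, by rw [hroot, mul_zero]⟩
    · right
      push_cast at h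
      linear_combination (2 * α + 1) * h

lemma abs_le_sqrt_23_div_two_iff (y : ℝ) : |y| ≤ √23 / 2 ↔ y ^ 2 ≤ 23 / 4 := by
  rw [← sq_le_sq₀ (abs_nonneg y) (by positivity), sq_abs, div_pow, Real.sq_sqrt (by norm_num)]
  norm_num

lemma sq_add_half_le_quarter_iff (x : ℝ) : (x + 1 / 2) ^ 2 ≤ 1 / 4 ↔ -1 ≤ x ∧ x ≤ 0 := by
  constructor
  · intro h; constructor <;> nlinarith
  · rintro ⟨h₁, h₂⟩; nlinarith

theorem stmt7 :
    {α : ℂ | (∃ b : ℝ, 0 ≤ b ∧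
          cbinom (α + 3) 3 + (b : ℂ) * cbinom (α + 2) 3 + (b : ℂ) * cbinom (α + 1) 3 +
              cbinom α 3 = 0) ∨
        cbinom (α + 2) 3 + cbinom (α + 1) 3 = 0} =
      {α : ℂ | α.im = 0 ∧ -1 ≤ α.re ∧ α.re ≤ 0} ∪
        {α : ℂ | α.re = -(1 / 2) ∧ 0 < |α.im| ∧ |α.im| ≤ Real.sqrt 23 / 2} := by
  ext α
  simp only [mem_ofPred_eq, mem_union, cbinom_symmetric_sum_eq,
    cbinom_add_two_add_cbinom_add_one, div_eq_zero_iff, OfNat.ofNat_ne_zero, or_false]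
  rw [roots_iff_exists_sq_add_half_eq,
    Complex.exists_ofReal_mem_Icc_eq_sq_iff (by norm_num) (by norm_num)]
  simp only [Complex.add_re, Complex.add_im, Complex.div_ofNat_re, Complex.div_ofNat_im,
    Complex.one_re, Complex.one_im, zero_div, add_zero, neg_div, neg_neg, ← eq_neg_iff_add_eq_zero,
    sq_add_half_le_quarter_iff, abs_le_sqrt_23_div_two_iff]
  constructor
  · rintro (h | ⟨hre, him⟩)
    · exact Or.inl h
    · rcases eq_or_ne α.im 0 with h0 | h0
      · exact Or.inl ⟨h0, by linarith, by linarith⟩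
      · exact Or.inr ⟨hre, abs_pos.2 h0, him⟩
  · exact Or.imp_right fun ⟨hre, _, him⟩ ↦ ⟨hre, him⟩
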